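/- arXiv:1903.03687 — 4 statements merged into one kernel-verified Lean document; each statement's English description precedes it below -/
import Mathlib

section
/- Let A be a commutative domain and let f : F \to G, g : G \to H be maps of finite free A-modules with g \circ f = 0. If the rank of f (size of the largest nonvanishing minor of a matrix representing f over the fraction field) plus the rank of g equals the rank of G, and both I(f) and I(g) equal the unit ideal, then the complex F \to G \to H is exact at G. -/
open Function Matrix

/-- The ideal of `r × r` minors of a matrix `U` over a commutative ring. -/
def minorsIdeal {A : Type*} [CommRing A] {a b : ℕ}
    (U : Matrix (Fin b) (Fin a) A) (r : ℕ) : Ideal A :=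
  Ideal.span {x : A | ∃ (ri : Fin r → Fin b) (ci : Fin r → Fin a),
    Injective ri ∧ Injective ci ∧ x = (U.submatrix ri ci).det}

/-- The rank of a matrix over a domain: its rank over the fraction field (which is
the size of the largest nonvanishing minor). -/
noncomputable def matRank {A : Type*} [CommRing A] [IsDomain A] {a b : ℕ}
    (U : Matrix (Fin b) (Fin a) A) : ℕ :=
  (U.map (algebraMap A (FractionRing A))).rank

/-!
Over the fraction field `K` of `A`, `rank U + rank V = b` and `V U = 0` force
`im U = ker V`. So if `V x = 0`, then `x = U y` for some `y` over `K`. Fix a maximal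
minor `Δ = det M` of `U`, `M = U[ri, ci]`, with `Δ ≠ 0`: the columns `ci` of `U` already span
`im U` over `K`, so `y` can be taken supported on `ci`, and Cramer's rule `adj M · M = Δ`
clears its denominators: `Δ x = U[·, ci] (adj M · x[ri])`. Hence every
maximal minor lies in the ideal `{d | d x ∈ im U}`, which is then the unit ideal.
-/

namespace Matrix

variable {m n o : Type*}

theorem range_mulVecLin_le_ker_of_mul_eq_zero {R : Type*} [CommSemiring R] [Fintype m]
    [Fintype n] {U : Matrix m n R} {V : Matrix o m R} (hVU : V * U = 0) :
    LinearMap.range U.mulVecLin ≤ LinearMap.ker V.mulVecLin := by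
  rintro _ ⟨y, rfl⟩
  simp [mulVec_mulVec, hVU]

theorem range_mulVecLin_submatrix_id_le {R : Type*} [CommSemiring R] [Fintype n] [DecidableEq n]
    [Fintype o] (U : Matrix m n R) (ci : o → n) :
    LinearMap.range (U.submatrix id ci).mulVecLin ≤ LinearMap.range U.mulVecLin := by
  have : U.submatrix id ci = U * (1 : Matrix n n R).submatrix (Equiv.refl n) ci := by
    rw [mul_submatrix_one]; rfl
  rw [this, mulVecLin_mul]
  exact LinearMap.range_comp_le_range _ _

theorem range_mulVecLin_submatrix_id_eq {K : Type*} [Field K] [Fintype m] [Fintype n]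
    [DecidableEq n] [Fintype o] [DecidableEq o] (U : Matrix m n K) (ri : o → m) (ci : o → n)
    (hrank : U.rank ≤ Fintype.card o) (hdet : (U.submatrix ri ci).det ≠ 0) :
    LinearMap.range (U.submatrix id ci).mulVecLin = LinearMap.range U.mulVecLin := by
  refine Submodule.eq_of_le_of_finrank_le (range_mulVecLin_submatrix_id_le U ci) ?_
  calc Module.finrank K (LinearMap.range U.mulVecLin)
      = U.rank := rfl
    _ ≤ (U.submatrix ri ci).rank := hrank.trans (rank_of_det_ne_zero hdet).ge
    _ ≤ (U.submatrix id ci).rank := rank_submatrix_le (U.submatrix id ci) ri id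

theorem range_mulVecLin_eq_ker_of_mul_eq_zero {K : Type*} [Field K] [Fintype m] [Fintype n]
    {U : Matrix m n K} {V : Matrix o m K} (hVU : V * U = 0)
    (hrank : U.rank + V.rank = Fintype.card m) :
    LinearMap.range U.mulVecLin = LinearMap.ker V.mulVecLin := by
  refine Submodule.eq_of_le_of_finrank_le (range_mulVecLin_le_ker_of_mul_eq_zero hVU) ?_
  have := V.mulVecLin.finrank_range_add_finrank_ker
  rw [Module.finrank_fintype_fun_eq_card] at this
  rw [rank, rank] at hrank
  omega

theorem mulVec_adjugate_mulVec_eq_det_smul {A K : Type*} [CommRing A] [CommRing K]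
    [Fintype o] [DecidableEq o] {φ : A →+* K} (hφ : Injective φ) (W : Matrix m o A) (ri : o → m)
    (x : m → A) (y : o → K) (hy : W.map φ *ᵥ y = φ ∘ x) :
    W *ᵥ ((W.submatrix ri id).adjugate *ᵥ (x ∘ ri)) = (W.submatrix ri id).det • x := by
  set M := W.submatrix ri id
  have hdet : φ M.det = (M.map φ).det := φ.map_det M
  have hadj : M.adjugate.map φ = (M.map φ).adjugate := φ.map_adjugate M
  have hMy : M.map φ *ᵥ y = φ ∘ x ∘ ri := funext fun k => congrFun hy (ri k)
  have hcramer : φ ∘ (M.adjugate *ᵥ (x ∘ ri)) = (M.map φ).det • y := by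
    funext k
    rw [Function.comp_apply, RingHom.map_mulVec, hadj, ← hMy, mulVec_mulVec, adjugate_mul,
      smul_mulVec, one_mulVec]
  funext i
  apply hφ
  rw [RingHom.map_mulVec, hcramer, mulVec_smul, hy, Pi.smul_apply, Pi.smul_apply, smul_eq_mul,
    smul_eq_mul, map_mul, hdet]
  rfl

end Matrix

theorem mem_of_minorsIdeal_eq_top {A M : Type*} [CommRing A] [AddCommGroup M] [Module A M]
    {a b r : ℕ} {U : Matrix (Fin b) (Fin a) A} (hU : minorsIdeal U r = ⊤) {N : Submodule A M}
    {x : M} (hx : ∀ (ri : Fin r → Fin b) (ci : Fin r → Fin a), (U.submatrix ri ci).det • x ∈ N) :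
    x ∈ N := by
  have hle : minorsIdeal U r ≤ N.comap (LinearMap.toSpanSingleton A M x) := by
    refine Ideal.span_le.mpr ?_
    rintro _ ⟨ri, ci, -, -, rfl⟩
    exact hx ri ci
  simpa using hle (hU ▸ Submodule.mem_top : (1 : A) ∈ minorsIdeal U r)

theorem minor_smul_mem_range_mulVecLin {A : Type*} [CommRing A] [IsDomain A] {a b : ℕ}
    (U : Matrix (Fin b) (Fin a) A) {x : Fin b → A}
    (hx : algebraMap A (FractionRing A) ∘ x ∈
      LinearMap.range (U.map (algebraMap A (FractionRing A))).mulVecLin)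
    (ri : Fin (matRank U) → Fin b) (ci : Fin (matRank U) → Fin a) :
    (U.submatrix ri ci).det • x ∈ LinearMap.range U.mulVecLin := by
  set φ := algebraMap A (FractionRing A)
  have hφ : Injective φ := IsFractionRing.injective A _
  by_cases hdet : (U.submatrix ri ci).det = 0
  · simp [hdet]
  have hdetK : ((U.map φ).submatrix ri ci).det ≠ 0 := by
    rw [show ((U.map φ).submatrix ri ci).det = φ (U.submatrix ri ci).det from
      (φ.map_det _).symm]
    exact (map_ne_zero_iff _ hφ).mpr hdet
  rw [← range_mulVecLin_submatrix_id_eq (U.map φ) ri ci (Fintype.card_fin _).ge hdetK] at hx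
  obtain ⟨y, hy⟩ := hx
  exact range_mulVecLin_submatrix_id_le U ci
    ⟨_, mulVec_adjugate_mulVec_eq_det_smul hφ _ ri x y hy⟩

theorem stmt_5_general (A : Type*) [CommRing A] [IsDomain A]
    (a b c : ℕ) (U : Matrix (Fin b) (Fin a) A) (V : Matrix (Fin c) (Fin b) A)
    (hcomp : V * U = 0)
    (hrank : matRank U + matRank V = b)
    (hIU : minorsIdeal U (matRank U) = ⊤) :
    LinearMap.range U.mulVecLin = LinearMap.ker V.mulVecLin := by
  set φ := algebraMap A (FractionRing A)
  have hexactK : LinearMap.range (U.map φ).mulVecLin = LinearMap.ker (V.map φ).mulVecLin :=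
    range_mulVecLin_eq_ker_of_mul_eq_zero
      (by rw [← Matrix.map_mul, hcomp, Matrix.map_zero _ (map_zero φ)])
      (by rw [Fintype.card_fin]; exact hrank)
  refine le_antisymm (range_mulVecLin_le_ker_of_mul_eq_zero hcomp) fun x hx => ?_
  have hxK : φ ∘ x ∈ LinearMap.range (U.map φ).mulVecLin := by
    rw [hexactK, LinearMap.mem_ker, mulVecLin_apply]
    funext i
    rw [← RingHom.map_mulVec, show V *ᵥ x = 0 from hx, Pi.zero_apply, map_zero, Pi.zero_apply]
  exact mem_of_minorsIdeal_eq_top hIU (minor_smul_mem_range_mulVecLin U hxK)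

/-- The Buchsbaum–Eisenbud exactness criterion in the case `I(f) = I(g) = A`:
for maps `f : A^a → A^b`, `g : A^b → A^c` of finite free modules over a noetherian
domain `A`, given by matrices `U`, `V` with `g ∘ f = 0`, if
`rank f + rank g = rank G = b` and the ideals of maximal minors of `U` and `V` are
the unit ideal, then the complex is exact at `A^b`. -/
theorem stmt_5 (A : Type*) [CommRing A] [IsDomain A] [IsNoetherianRing A]
    (a b c : ℕ) (U : Matrix (Fin b) (Fin a) A) (V : Matrix (Fin c) (Fin b) A)
    (hcomp : V * U = 0)
    (hrank : matRank U + matRank V = b)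
    (hIU : minorsIdeal U (matRank U) = ⊤)
    (hIV : minorsIdeal V (matRank V) = ⊤) :
    LinearMap.range U.mulVecLin = LinearMap.ker V.mulVecLin :=
  stmt_5_general A a b c U V hcomp hrank hIU
end

section
/- Let A be the (k+1) \times n matrix whose columns are grouped into k blocks, where the column (i,j) (block i, position j, 1 \leq j \leq m_i) is e_i + (j-1) e_{k+1} \in \mathbb{N}^{k+1}. Suppose u, v \in \mathbb{N}^n satisfy A u = A v, x^u \succ x^v or u = v in the lexicographic order with variables ordered x_{1,1} \succ \cdots \succ x_{1,m_1} \succ x_{2,1} \succ \cdots \succ x_{k,m_k}, and u is supported on a set of the form \{(1,m_1),\dots,(i-1,m_{i-1}), (i,\ell), (i,\ell+1), (i+1,1),\dots,(k,1)\}. Then u = v. -/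
/-!
Let `(a, b)` be the first position, in the lexicographic order, where `u` and `v` differ, so
`v (a, b) < u (a, b)`. If `a < i`, then `b = m a` is the last position of block `a`, and the equal
block sums force `u (a, b) = v (a, b)`. Otherwise the blocks after `a` carry no weight in `u`,
so block `a` of `v` weighs at most as much as block `a` of `u`. Within block `a`, `u` agrees with
`v` before `b` and is supported on `{b, b + 1}` from `b` on; moving mass of `v` away from `b`
costs at least as much weight as it moves, which forces `u (a, b) ≤ v (a, b)`.
-/

open Finset

theorem eq_of_sum_eq_of_forall_ne {ι M : Type*} [DecidableEq ι] [AddCancelCommMonoid M]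
    {s : Finset ι} {f g : ι → M} {x : ι} (hx : x ∈ s)
    (hne : ∀ j ∈ s, j ≠ x → f j = g j) (hsum : ∑ j ∈ s, f j = ∑ j ∈ s, g j) :
    f x = g x := by
  rw [← add_sum_erase s f hx, ← add_sum_erase s g hx,
    sum_congr rfl fun j hj => hne j (mem_erase.1 hj).2 (mem_erase.1 hj).1] at hsum
  exact add_right_cancel hsum

theorem le_of_sum_eq_of_eq_before_of_le_after {ι M : Type*} [LinearOrder ι] [AddCommMonoid M]
    [PartialOrder M] [IsOrderedCancelAddMonoid M] {s : Finset ι} {F G : ι → M} {a : ι}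
    (ha : a ∈ s) (hbefore : ∀ r ∈ s, r < a → F r = G r)
    (hafter : ∀ r ∈ s, a < r → F r ≤ G r) (hsum : ∑ r ∈ s, F r = ∑ r ∈ s, G r) :
    G a ≤ F a := by
  have key : ∑ r ∈ s, (F r + if r = a then G r else 0) ≤
      ∑ r ∈ s, (G r + if r = a then F r else 0) := by
    refine sum_le_sum fun r hr => ?_
    rcases lt_trichotomy r a with h | rfl | h
    · simp [h.ne, hbefore r hr h]
    · simp [add_comm]
    · simpa [h.ne'] using hafter r hr h
  rw [sum_add_distrib, sum_add_distrib, sum_ite_eq', sum_ite_eq', if_pos ha, if_pos ha,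
    hsum] at key
  exact le_of_add_le_add_left key

theorem le_of_sum_eq_of_moment_le {s : Finset ℕ} {f g : ℕ → ℕ} {b : ℕ} (hb : b ∈ s)
    (hbefore : ∀ j ∈ s, j < b → f j = g j) (hsupp : ∀ j ∈ s, b + 1 < j → f j = 0)
    (hsum : ∑ j ∈ s, f j = ∑ j ∈ s, g j)
    (hmoment : ∑ j ∈ s, j * g j ≤ ∑ j ∈ s, j * f j) : f b ≤ g b := by
  set d : ℕ → ℤ := fun j => g j - f j
  have hsumℤ : ∑ j ∈ s, (f j : ℤ) = ∑ j ∈ s, (g j : ℤ) := by exact_mod_cast hsum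
  have hmomentℤ : ∑ j ∈ s, (j : ℤ) * g j ≤ ∑ j ∈ s, (j : ℤ) * f j := by exact_mod_cast hmoment
  have hdsum : ∑ j ∈ s, d j = 0 := by
    simp only [d, sum_sub_distrib]
    linarith
  have hdmoment : ∑ j ∈ s, ((j : ℤ) - b) * d j ≤ 0 := by
    simp only [d, sub_mul, mul_sub, sum_sub_distrib, ← mul_sum, hsumℤ]
    linarith
  -- `d` vanishes before `b`, and beyond `b + 1` it is `g ≥ 0`, weighted by `j - b ≥ 1`
  have hpoint : ∀ j ∈ s, d j - (if j = b then d j else 0) ≤ ((j : ℤ) - b) * d j := by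
    intro j hj
    rcases lt_trichotomy j b with h | rfl | h
    · simp [d, h.ne, hbefore j hj h]
    · simp
    · rw [if_neg h.ne', sub_zero]
      rcases (Nat.succ_le_of_lt h).eq_or_lt with rfl | h'
      · push_cast
        linarith
      · have hdj : 0 ≤ d j := by simp [d, hsupp j hj h']
        have hw : (1 : ℤ) ≤ j - b := by omega
        nlinarith
  have hdb : 0 ≤ d b := by
    have := sum_le_sum hpoint
    rw [sum_sub_distrib, sum_ite_eq', if_pos hb, hdsum] at this
    linarith
  simpa [d] using hdb

theorem sum_Icc_mul_eq_sum_pred_mul_add_sum (n : ℕ) (w : ℕ → ℕ) :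
    ∑ j ∈ Icc 1 n, j * w j = ∑ j ∈ Icc 1 n, (j - 1) * w j + ∑ j ∈ Icc 1 n, w j := by
  rw [← sum_add_distrib]
  refine sum_congr rfl fun j hj => ?_
  obtain ⟨j, rfl⟩ := Nat.exists_eq_add_of_le' (mem_Icc.1 hj).1
  simp only [add_tsub_cancel_right]
  ring

def blockWeight (m : ℕ → ℕ) (w : ℕ × ℕ → ℕ) (r : ℕ) : ℕ :=
  ∑ j ∈ Icc 1 (m r), (j - 1) * w (r, j)

theorem blockWeight_le_of_eq_before_of_flat_after {k a : ℕ} {m : ℕ → ℕ} {u v : ℕ × ℕ → ℕ}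
    (ha : a ∈ Icc 1 k)
    (htotal : ∑ r ∈ Icc 1 k, blockWeight m u r = ∑ r ∈ Icc 1 k, blockWeight m v r)
    (hbefore : ∀ q : ℕ × ℕ, q.1 < a → u q = v q)
    (hflat : ∀ r j, a < r → u (r, j) ≠ 0 → j = 1) :
    blockWeight m v a ≤ blockWeight m u a := by
  refine le_of_sum_eq_of_eq_before_of_le_after ha
    (fun r _ hr => sum_congr rfl fun j _ => by rw [hbefore (r, j) hr])
    (fun r _ hr => (sum_eq_zero fun j _ => ?_).trans_le (Nat.zero_le _)) htotal
  rcases eq_or_ne (u (r, j)) 0 with h | h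
  · rw [h, mul_zero]
  · rw [hflat r j hr h, Nat.sub_self, zero_mul]

theorem stmt_8_general (k : ℕ) (m : ℕ → ℕ)
    (u v : ℕ × ℕ → ℕ)
    (hu : ∀ i j : ℕ, u (i, j) ≠ 0 → 1 ≤ i ∧ i ≤ k ∧ 1 ≤ j ∧ j ≤ m i)
    -- `A u = A v`: the first `k` rows (block sums) agree
    (hA1 : ∀ i, 1 ≤ i → i ≤ k →
      ∑ j ∈ Finset.Icc 1 (m i), u (i, j) = ∑ j ∈ Finset.Icc 1 (m i), v (i, j))
    -- `A u = A v`: the last row (weight `j - 1` on `x_{i,j}`) agrees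
    (hA2 : ∑ i ∈ Finset.Icc 1 k, ∑ j ∈ Finset.Icc 1 (m i), (j - 1) * u (i, j) =
      ∑ i ∈ Finset.Icc 1 k, ∑ j ∈ Finset.Icc 1 (m i), (j - 1) * v (i, j))
    -- `x^u ≻ x^v` or `u = v` in the lexicographic order on exponent vectors
    (hlex : u = v ∨ ∃ p : ℕ × ℕ, v p < u p ∧
      ∀ q : ℕ × ℕ, (q.1 < p.1 ∨ (q.1 = p.1 ∧ q.2 < p.2)) → u q = v q)
    -- the support condition on `u`
    (hshape : ∃ i ℓ : ℕ, 1 ≤ i ∧ i ≤ k ∧ 1 ≤ ℓ ∧ ℓ + 1 ≤ m i ∧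
      ∀ r s : ℕ, u (r, s) ≠ 0 →
        (r < i ∧ s = m r) ∨ (r = i ∧ (s = ℓ ∨ s = ℓ + 1)) ∨ (i < r ∧ s = 1)) :
    u = v := by
  rcases hlex with huv | ⟨⟨a, b⟩, hlt, hmin⟩
  · exact huv
  obtain ⟨i, ℓ, -, -, -, -, hsupp⟩ := hshape
  have hab : u (a, b) ≠ 0 := by omega
  obtain ⟨ha1, hak, hb1, hbm⟩ := hu a b hab
  have hb : b ∈ Icc 1 (m a) := mem_Icc.2 ⟨hb1, hbm⟩
  have hrow : ∀ j ∈ Icc 1 (m a), j < b → u (a, j) = v (a, j) :=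
    fun j _ hj => hmin (a, j) (Or.inr ⟨rfl, hj⟩)
  have hblock := hA1 a ha1 hak
  by_cases hai : a < i
  · have hlast : b = m a := by rcases hsupp a b hab with h | h | h <;> omega
    refine absurd (eq_of_sum_eq_of_forall_ne hb (fun j hj hne => hrow j hj ?_) hblock) hlt.ne'
    have := (mem_Icc.1 hj).2
    omega
  · have hweight : blockWeight m v a ≤ blockWeight m u a :=
      blockWeight_le_of_eq_before_of_flat_after (mem_Icc.2 ⟨ha1, hak⟩) hA2
        (fun q hq => hmin q (Or.inl hq))
        (fun r j hr h => by rcases hsupp r j h with h' | h' | h' <;> omega)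
    have hmoment : ∑ j ∈ Icc 1 (m a), j * v (a, j) ≤ ∑ j ∈ Icc 1 (m a), j * u (a, j) := by
      rw [sum_Icc_mul_eq_sum_pred_mul_add_sum, sum_Icc_mul_eq_sum_pred_mul_add_sum, hblock]
      exact Nat.add_le_add_right hweight _
    have htail : ∀ j ∈ Icc 1 (m a), b + 1 < j → u (a, j) = 0 := by
      intro j _ hj
      by_contra h
      rcases hsupp a j h with h' | h' | h' <;> rcases hsupp a b hab with h'' | h'' | h'' <;> omega
    exact absurd hlt (le_of_sum_eq_of_moment_le hb hrow htail hblock hmoment).not_gt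

/-- Proposition 3.4 of the paper. Let `A` be the matrix defining the rational normal
`k`-scroll `S(m₁-1,…,m_k-1)` as a toric variety, with variables `x_{i,j}` for
`1 ≤ i ≤ k`, `1 ≤ j ≤ mᵢ` ordered lexicographically
`x_{1,1} ≻ ⋯ ≻ x_{1,m₁} ≻ x_{2,1} ≻ ⋯ ≻ x_{k,m_k}`. If `u, v` are exponent vectors
with `A u = A v` (same block sums, same weighted last coordinate), `x^u ⪰ x^v` in the
lexicographic order, and `u` is supported on a set of the form
`{(1,m₁),…,(i-1,m_{i-1}), (i,ℓ), (i,ℓ+1), (i+1,1),…,(k,1)}`, then `u = v`. -/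
theorem stmt_8 (k : ℕ) (m : ℕ → ℕ) (hk : 1 ≤ k)
    (hm : ∀ i, 1 ≤ i → i ≤ k → 1 ≤ m i)
    (u v : ℕ × ℕ → ℕ)
    (hu : ∀ i j : ℕ, u (i, j) ≠ 0 → 1 ≤ i ∧ i ≤ k ∧ 1 ≤ j ∧ j ≤ m i)
    (hv : ∀ i j : ℕ, v (i, j) ≠ 0 → 1 ≤ i ∧ i ≤ k ∧ 1 ≤ j ∧ j ≤ m i)
    -- `A u = A v`: the first `k` rows (block sums) agree
    (hA1 : ∀ i, 1 ≤ i → i ≤ k →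
      ∑ j ∈ Finset.Icc 1 (m i), u (i, j) = ∑ j ∈ Finset.Icc 1 (m i), v (i, j))
    -- `A u = A v`: the last row (weight `j - 1` on `x_{i,j}`) agrees
    (hA2 : ∑ i ∈ Finset.Icc 1 k, ∑ j ∈ Finset.Icc 1 (m i), (j - 1) * u (i, j) =
      ∑ i ∈ Finset.Icc 1 k, ∑ j ∈ Finset.Icc 1 (m i), (j - 1) * v (i, j))
    -- `x^u ≻ x^v` or `u = v` in the lexicographic order on exponent vectors
    (hlex : u = v ∨ ∃ p : ℕ × ℕ, v p < u p ∧
      ∀ q : ℕ × ℕ, (q.1 < p.1 ∨ (q.1 = p.1 ∧ q.2 < p.2)) → u q = v q)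
    -- the support condition on `u`
    (hshape : ∃ i ℓ : ℕ, 1 ≤ i ∧ i ≤ k ∧ 1 ≤ ℓ ∧ ℓ + 1 ≤ m i ∧
      ∀ r s : ℕ, u (r, s) ≠ 0 →
        (r < i ∧ s = m r) ∨ (r = i ∧ (s = ℓ ∨ s = ℓ + 1)) ∨ (i < r ∧ s = 1)) :
    u = v :=
  stmt_8_general k m u v hu hA1 hA2 hlex hshape
end

section
/- For the simplicial complex \Delta on vertex set \{(i,j) : 1 \leq i \leq k, 1 \leq j \leq m_i\} whose facets are the sets \{(1,m_1),\dots,(i-1,m_{i-1}),(i,j),(i,j+1),(i+1,1),\dots,(k,1)\} for 1 \leq i \leq k and 1 \leq j \leq m_i - 1 (with each m_i \geq 2), the number of d-dimensional faces is f_d = \binom{k}{d} n - d \binom{k+1}{d+1}, where n = m_1 + \cdots + m_k, for all d \geq 0. -/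
/-!
Order the facets lexicographically by `(i, j)`. This is a shelling: once the facets before
`F(i,j)` are present, a face of `F(i,j)` is new exactly when it contains the vertex `(i, j+1)`,
since removing that vertex from `F(i,j)` lands in the previous facet (`F(i,j-1)`, or
`F(i-1, m_{i-1}-1)` when `j = 1`), and from `F(1,1)` it leaves the base simplex
`{(1,1),…,(k,1)}`. So the `d`-faces split into the `C(k, d+1)` faces of the base and, for each
of the `n - k` facets, the `C(k, d)` faces containing its top vertex; the identities
`C(k+1,d+1) = C(k,d) + C(k,d+1)` and `(k+1) C(k,d) = (d+1) C(k+1,d+1)` turn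
`C(k,d+1) + (n-k) C(k,d)` into the stated formula.
-/

open Finset

/-- The facet of the complex `Δ` of the scroll indexed by `(i, j)`,
`1 ≤ i ≤ k`, `1 ≤ j ≤ mᵢ - 1`:
`{(1,m₁),…,(i-1,m_{i-1}), (i,j), (i,j+1), (i+1,1),…,(k,1)}`. -/
def scrollFacet (k : ℕ) (m : ℕ → ℕ) (i j : ℕ) : Finset (ℕ × ℕ) :=
  ((Finset.Icc 1 (i - 1)).image fun r => (r, m r)) ∪ {(i, j), (i, j + 1)} ∪
    ((Finset.Icc (i + 1) k).image fun r => (r, (1 : ℕ)))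

section
variable {k : ℕ} {m : ℕ → ℕ}

theorem mem_scrollFacet {i j a b : ℕ} :
    (a, b) ∈ scrollFacet k m i j ↔
      (1 ≤ a ∧ a < i ∧ b = m a) ∨ (a = i ∧ (b = j ∨ b = j + 1)) ∨
        (i < a ∧ a ≤ k ∧ b = 1) := by
  simp only [scrollFacet, mem_union, mem_image, mem_Icc, mem_insert, mem_singleton, Prod.mk.injEq]
  grind

def scrollBase (k : ℕ) : Finset (ℕ × ℕ) := (Icc 1 k).image fun r => (r, 1)

theorem mem_scrollBase {a b : ℕ} : (a, b) ∈ scrollBase k ↔ 1 ≤ a ∧ a ≤ k ∧ b = 1 := by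
  simp only [scrollBase, mem_image, mem_Icc, Prod.mk.injEq]
  grind

theorem card_scrollBase : #(scrollBase k) = k := by
  rw [scrollBase, card_image_of_injective _ fun _ _ h => congrArg Prod.fst h, Nat.card_Icc,
    Nat.add_sub_cancel]

theorem card_scrollFacet {i j : ℕ} (hi : 1 ≤ i) (hik : i ≤ k) :
    #(scrollFacet k m i j) = k + 1 := by
  have fst_injective (c : ℕ → ℕ) : Function.Injective fun r => (r, c r) :=
    fun _ _ h => congrArg Prod.fst h
  rw [scrollFacet, card_union_of_disjoint, card_union_of_disjoint,
    card_image_of_injective _ (fst_injective m),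
    card_image_of_injective _ (fst_injective fun _ => 1), card_pair (by simp), Nat.card_Icc,
    Nat.card_Icc]
  · omega
  all_goals
    simp only [disjoint_left, mem_union, mem_image, mem_Icc, mem_insert, mem_singleton]
    grind

theorem erase_scrollFacet_subset_pred {i j : ℕ} (hj : 2 ≤ j) :
    (scrollFacet k m i j).erase (i, j + 1) ⊆ scrollFacet k m i (j - 1) := by
  rintro ⟨a, b⟩ h
  rw [mem_erase, mem_scrollFacet] at h
  rw [mem_scrollFacet]
  grind

theorem erase_scrollFacet_one_subset {i : ℕ} (hi : 2 ≤ i) (hik : i ≤ k)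
    (hm : 1 ≤ m (i - 1)) :
    (scrollFacet k m i 1).erase (i, 2) ⊆ scrollFacet k m (i - 1) (m (i - 1) - 1) := by
  rintro ⟨a, b⟩ h
  rw [mem_erase, mem_scrollFacet] at h
  rw [mem_scrollFacet]
  grind

theorem erase_scrollFacet_one_one (hk : 1 ≤ k) :
    (scrollFacet k m 1 1).erase (1, 2) = scrollBase k := by
  ext ⟨a, b⟩
  rw [mem_erase, mem_scrollFacet, mem_scrollBase]
  grind

theorem eq_of_mem_scrollFacet_of_mem_scrollFacet {i j i' j' : ℕ} (hj : 1 ≤ j) (hj' : 1 ≤ j')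
    (h : (i', j' + 1) ∈ scrollFacet k m i j) (h' : (i, j + 1) ∈ scrollFacet k m i' j') :
    i = i' ∧ j = j' := by
  rw [mem_scrollFacet] at h h'
  omega

def scrollIndex (k : ℕ) (m : ℕ → ℕ) : Finset ((_ : ℕ) × ℕ) :=
  (Icc 1 k).sigma fun i => Icc 1 (m i - 1)

theorem mem_scrollIndex {p : (_ : ℕ) × ℕ} :
    p ∈ scrollIndex k m ↔ 1 ≤ p.1 ∧ p.1 ≤ k ∧ 1 ≤ p.2 ∧ p.2 ≤ m p.1 - 1 := by
  simp only [scrollIndex, mem_sigma, mem_Icc, and_assoc]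

theorem card_scrollIndex : #(scrollIndex k m) = ∑ i ∈ Icc 1 k, (m i - 1) := by
  simp only [scrollIndex, card_sigma, Nat.card_Icc, Nat.add_sub_cancel]

theorem subset_scrollBase_or_exists_scrollIndex (hm : ∀ i, 1 ≤ i → i ≤ k → 2 ≤ m i)
    {F : Finset (ℕ × ℕ)} (i j : ℕ) (hi : 1 ≤ i) (hik : i ≤ k) (hj : 1 ≤ j)
    (hjm : j ≤ m i - 1)
    (hF : F ⊆ scrollFacet k m i j) :
    F ⊆ scrollBase k ∨
      ∃ p ∈ scrollIndex k m, F ⊆ scrollFacet k m p.1 p.2 ∧ (p.1, p.2 + 1) ∈ F := by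
  induction i using Nat.strong_induction_on generalizing j with
  | _ i ihi =>
  induction j using Nat.strong_induction_on with
  | _ j ihj =>
  by_cases htop : (i, j + 1) ∈ F
  · exact .inr ⟨⟨i, j⟩, mem_scrollIndex.2 ⟨hi, hik, hj, hjm⟩, hF, htop⟩
  have hF' : F ⊆ (scrollFacet k m i j).erase (i, j + 1) := subset_erase.2 ⟨hF, htop⟩
  obtain hj | rfl := (show 2 ≤ j ∨ j = 1 by omega)
  · exact ihj (j - 1) (by omega) (by omega) (by omega)
      (hF'.trans (erase_scrollFacet_subset_pred hj))
  obtain hi | rfl := (show 2 ≤ i ∨ i = 1 by omega)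
  · have hm' := hm (i - 1) (by omega) (by omega)
    exact ihi (i - 1) (by omega) _ (by omega) (by omega) (by omega) le_rfl
      (hF'.trans (erase_scrollFacet_one_subset hi hik (by omega)))
  · exact .inl (erase_scrollFacet_one_one hik ▸ hF')

def scrollPiece (k : ℕ) (m : ℕ → ℕ) (d i j : ℕ) : Finset (Finset (ℕ × ℕ)) :=
  {F ∈ (scrollFacet k m i j).powersetCard (d + 1) | {(i, j + 1)} ⊆ F}

theorem card_scrollPiece {d i j : ℕ} (hi : 1 ≤ i) (hik : i ≤ k) :
    #(scrollPiece k m d i j) = k.choose d := by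
  have htop : {(i, j + 1)} ⊆ scrollFacet k m i j :=
    singleton_subset_iff.2 (mem_scrollFacet.2 (.inr (.inl ⟨rfl, .inr rfl⟩)))
  rw [scrollPiece, card_filter_powersetCard_subset _ _ _ htop (by simp), card_scrollFacet hi hik,
    card_singleton, Nat.add_sub_cancel, Nat.add_sub_cancel]

theorem disjoint_scrollPiece {d : ℕ} {p q : (_ : ℕ) × ℕ} (hp : 1 ≤ p.2) (hq : 1 ≤ q.2)
    (hpq : p ≠ q) : Disjoint (scrollPiece k m d p.1 p.2) (scrollPiece k m d q.1 q.2) := by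
  simp only [scrollPiece, disjoint_left, mem_filter, mem_powersetCard, singleton_subset_iff]
  rintro F ⟨⟨hFp, -⟩, hp'⟩ ⟨⟨hFq, -⟩, hq'⟩
  obtain ⟨h1, h2⟩ := eq_of_mem_scrollFacet_of_mem_scrollFacet hp hq (hFp hq') (hFq hp')
  exact hpq (Sigma.ext h1 (heq_of_eq h2))

theorem disjoint_powersetCard_scrollBase_scrollPiece {d i j : ℕ} (hj : 1 ≤ j) :
    Disjoint ((scrollBase k).powersetCard (d + 1)) (scrollPiece k m d i j) := by
  simp only [scrollPiece, disjoint_left, mem_filter, mem_powersetCard, singleton_subset_iff]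
  rintro F ⟨hF, -⟩ ⟨-, htop⟩
  have := (mem_scrollBase.1 (hF htop)).2.2
  omega

def scrollFaces (k : ℕ) (m : ℕ → ℕ) (d : ℕ) : Finset (Finset (ℕ × ℕ)) :=
  (scrollBase k).powersetCard (d + 1) ∪
    (scrollIndex k m).biUnion fun p => scrollPiece k m d p.1 p.2

theorem card_scrollFaces (d : ℕ) :
    #(scrollFaces k m d) = k.choose (d + 1) + (∑ i ∈ Icc 1 k, (m i - 1)) * k.choose d := by
  have hpiece : ∀ p ∈ scrollIndex k m, #(scrollPiece k m d p.1 p.2) = k.choose d :=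
    fun p hp => card_scrollPiece (mem_scrollIndex.1 hp).1 (mem_scrollIndex.1 hp).2.1
  rw [scrollFaces, card_union_of_disjoint, card_powersetCard, card_scrollBase, card_biUnion,
    sum_congr rfl hpiece, sum_const, card_scrollIndex, smul_eq_mul]
  · exact fun p hp q hq =>
      disjoint_scrollPiece (mem_scrollIndex.1 hp).2.2.1 (mem_scrollIndex.1 hq).2.2.1
  · exact (disjoint_biUnion_right _ _ _).2 fun p hp =>
      disjoint_powersetCard_scrollBase_scrollPiece (mem_scrollIndex.1 hp).2.2.1

theorem coe_scrollFaces (hm : ∀ i, 1 ≤ i → i ≤ k → 2 ≤ m i) (d : ℕ) :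
    ↑(scrollFaces k m d) = {F : Finset (ℕ × ℕ) | F.card = d + 1 ∧
        ∃ i j : ℕ, 1 ≤ i ∧ i ≤ k ∧ 1 ≤ j ∧ j ≤ m i - 1 ∧
          F ⊆ scrollFacet k m i j} := by
  ext F
  simp only [mem_coe, Set.mem_ofPred, scrollFaces, mem_union, mem_biUnion, scrollPiece,
    mem_filter, mem_powersetCard, singleton_subset_iff]
  constructor
  · rintro (⟨hFB, hcard⟩ | ⟨p, hp, ⟨hF, hcard⟩, -⟩)
    · obtain ⟨⟨a, b⟩, hab⟩ := card_pos.1 (by omega : 0 < #F)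
      have hk : 1 ≤ k := by have := mem_scrollBase.1 (hFB hab); omega
      have hm1 := hm 1 le_rfl hk
      exact ⟨hcard, 1, 1, le_rfl, hk, le_rfl, by omega,
        hFB.trans (erase_scrollFacet_one_one hk ▸ erase_subset _ _)⟩
    · obtain ⟨hi, hik, hj, hjm⟩ := mem_scrollIndex.1 hp
      exact ⟨hcard, p.1, p.2, hi, hik, hj, hjm, hF⟩
  · rintro ⟨hcard, i, j, hi, hik, hj, hjm, hF⟩
    obtain hFB | ⟨p, hp, hFp, htop⟩ :=
      subset_scrollBase_or_exists_scrollIndex hm i j hi hik hj hjm hF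
    · exact .inl ⟨hFB, hcard⟩
    · exact .inr ⟨p, hp, ⟨hFp, hcard⟩, htop⟩

end

theorem stmt_11_general (k : ℕ) (m : ℕ → ℕ) (d : ℕ)
    (hm : ∀ i, 1 ≤ i → i ≤ k → 2 ≤ m i) :
    ({F : Finset (ℕ × ℕ) | F.card = d + 1 ∧
        ∃ i j : ℕ, 1 ≤ i ∧ i ≤ k ∧ 1 ≤ j ∧ j ≤ m i - 1 ∧ F ⊆ scrollFacet k m i j}.ncard : ℤ) =
      (k.choose d : ℤ) * (∑ i ∈ Finset.Icc 1 k, (m i : ℤ)) -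
        (d : ℤ) * ((k + 1).choose (d + 1) : ℤ) := by
  rw [← coe_scrollFaces hm, Set.ncard_coe_finset, card_scrollFaces]
  have hsum :
      ((∑ i ∈ Icc 1 k, (m i - 1) : ℕ) : ℤ) = ∑ i ∈ Icc 1 k, (m i : ℤ) - k := by
    have hm1 : ∀ i ∈ Icc 1 k, 1 ≤ m i := fun i hi =>
      one_le_two.trans (hm i (mem_Icc.1 hi).1 (mem_Icc.1 hi).2)
    rw [Nat.cast_sum, sum_congr rfl fun i hi => Nat.cast_sub (hm1 i hi), sum_sub_distrib]
    simp
  have h1 : ((k : ℤ) + 1) * k.choose d = (k + 1).choose (d + 1) * (d + 1) := by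
    exact_mod_cast Nat.add_one_mul_choose_eq k d
  have h2 : ((k + 1).choose (d + 1) : ℤ) = k.choose d + k.choose (d + 1) := by
    exact_mod_cast Nat.choose_succ_succ' k d
  push_cast [hsum]
  linear_combination -h1 - h2

/-- The number of `d`-dimensional faces of the simplicial complex `Δ` of the
rational normal `k`-scroll is `f_d = C(k,d) n - d C(k+1,d+1)`, where
`n = m₁ + ⋯ + m_k`, for all `d ≥ 0` (each `mᵢ ≥ 2`). -/
theorem stmt_11 (k : ℕ) (m : ℕ → ℕ) (d : ℕ) (hk : 1 ≤ k)
    (hm : ∀ i, 1 ≤ i → i ≤ k → 2 ≤ m i) :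
    ({F : Finset (ℕ × ℕ) | F.card = d + 1 ∧
        ∃ i j : ℕ, 1 ≤ i ∧ i ≤ k ∧ 1 ≤ j ∧ j ≤ m i - 1 ∧ F ⊆ scrollFacet k m i j}.ncard : ℤ) =
      (k.choose d : ℤ) * (∑ i ∈ Finset.Icc 1 k, (m i : ℤ)) -
        (d : ℤ) * ((k + 1).choose (d + 1) : ℤ) :=
  stmt_11_general k m d hm
end

section
/- Let D \subseteq k[x_{i,j} : 1 \leq i \leq k, 1 \leq j \leq m_i] be the monomial ideal generated by \{x_{i,j} x_{i,\ell} : |j - \ell| \geq 2\} \cup \{x_{i,j} x_{r,s} : i < r, j < m_i, s > 1\}. If a monomial x^u is not in D and two variables x_{i,j}, x_{i,\ell} with j < \ell in the same block i have positive exponent in u, then \ell = j + 1; moreover u is supported on at most two variables from block i, at most the last variable x_{i',m_{i'}} for each block i' < i, and at most the first variable x_{i',1} for each block i' > i. -/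
open MvPolynomial

/-- The monomial ideal `D`, generated by `x_{i,j} x_{i,ℓ}` with `|j - ℓ| ≥ 2` and by
`x_{i,j} x_{r,s}` with `i < r`, `j < mᵢ`, `s > 1` (all indices in range). -/
noncomputable def scrollDiagIdeal (F : Type*) [Field F] (k : ℕ) (m : ℕ → ℕ) :
    Ideal (MvPolynomial (ℕ × ℕ) F) :=
  Ideal.span
    ({g | ∃ i j ℓ : ℕ, 1 ≤ i ∧ i ≤ k ∧ 1 ≤ j ∧ j ≤ m i ∧ 1 ≤ ℓ ∧ ℓ ≤ m i ∧
        j + 2 ≤ ℓ ∧ g = X (i, j) * X (i, ℓ)} ∪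
      {g | ∃ i j r s : ℕ, 1 ≤ i ∧ i < r ∧ r ≤ k ∧ 1 ≤ j ∧ j < m i ∧ 1 < s ∧ s ≤ m r ∧
        g = X (i, j) * X (r, s)})

namespace MvPolynomial

variable {σ R : Type*} [CommSemiring R]

theorem monomial_mem_span_of_le {S : Set (MvPolynomial σ R)} {u v : σ →₀ ℕ}
    (hv : monomial v 1 ∈ S) (hvu : v ≤ u) (a : R) : monomial u a ∈ Ideal.span S := by
  have hsplit : monomial u a = monomial (u - v) a * monomial v 1 := by
    rw [monomial_mul, mul_one, tsub_add_cancel_of_le hvu]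
  rw [hsplit]
  exact Ideal.mul_mem_left _ _ (Ideal.subset_span hv)

theorem single_add_single_le {u : σ →₀ ℕ} {p q : σ} (hpq : p ≠ q) (hp : 0 < u p)
    (hq : 0 < u q) : Finsupp.single p 1 + Finsupp.single q 1 ≤ u := by
  classical
  intro x
  simp only [Finsupp.add_apply, Finsupp.single_apply]
  split_ifs <;> subst_vars <;> first | exact absurd rfl hpq | omega

theorem monomial_mem_span_of_X_mul_X_mem {S : Set (MvPolynomial σ R)} {u : σ →₀ ℕ}
    {p q : σ} (hpq : p ≠ q) (hp : 0 < u p) (hq : 0 < u q) (hS : X p * X q ∈ S) (a : R) :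
    monomial u a ∈ Ideal.span S := by
  rw [X, X, monomial_mul, one_mul] at hS
  exact monomial_mem_span_of_le hS (single_add_single_le hpq hp hq) a

end MvPolynomial

namespace scrollDiagIdeal

variable {F : Type*} [Field F] {k : ℕ} {m : ℕ → ℕ} {u : (ℕ × ℕ) →₀ ℕ}

theorem bounds_of_pos (hu : ∀ p ∈ u.support, 1 ≤ p.1 ∧ p.1 ≤ k ∧ 1 ≤ p.2 ∧ p.2 ≤ m p.1)
    {a b : ℕ} (h : 0 < u (a, b)) : 1 ≤ a ∧ a ≤ k ∧ 1 ≤ b ∧ b ≤ m a :=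
  hu _ (Finsupp.mem_support_iff.mpr h.ne')

variable (hu : ∀ p ∈ u.support, 1 ≤ p.1 ∧ p.1 ≤ k ∧ 1 ≤ p.2 ∧ p.2 ≤ m p.1)
  (hD : monomial u (1 : F) ∉ scrollDiagIdeal F k m)
include hu hD

theorem le_add_one_of_pos_of_pos {i a b : ℕ} (ha : 0 < u (i, a))
    (hb : 0 < u (i, b)) : b ≤ a + 1 := by
  by_contra! h
  obtain ⟨hi1, hik, ha1, ham⟩ := bounds_of_pos hu ha
  obtain ⟨-, -, hb1, hbm⟩ := bounds_of_pos hu hb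
  exact hD (monomial_mem_span_of_X_mul_X_mem (by simp; omega) ha hb
    (Or.inl ⟨i, a, b, hi1, hik, ha1, ham, hb1, hbm, h, rfl⟩) 1)

theorem eq_last_of_pos_of_lt {i r s t : ℕ} (hr : r < i) (hs : 0 < u (r, s))
    (ht1 : 1 < t) (ht : 0 < u (i, t)) : s = m r := by
  by_contra hne
  obtain ⟨hr1, -, hs1, hsm⟩ := bounds_of_pos hu hs
  obtain ⟨-, hik, -, htm⟩ := bounds_of_pos hu ht
  exact hD (monomial_mem_span_of_X_mul_X_mem (by simp; omega) hs ht
    (Or.inr ⟨r, s, i, t, hr1, hr, hik, hs1, lt_of_le_of_ne hsm hne, ht1, htm, rfl⟩) 1)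

theorem eq_one_of_pos_of_lt {i r j s : ℕ} (hr : i < r) (hj : 0 < u (i, j)) (hjm : j < m i)
    (hs : 0 < u (r, s)) : s = 1 := by
  by_contra hne
  obtain ⟨hi1, -, hj1, -⟩ := bounds_of_pos hu hj
  obtain ⟨-, hrk, hs1, hsm⟩ := bounds_of_pos hu hs
  exact hD (monomial_mem_span_of_X_mul_X_mem (by simp; omega) hj hs
    (Or.inr ⟨i, j, r, s, hi1, hr, hrk, hj1, hjm, by omega, hsm, rfl⟩) 1)

end scrollDiagIdeal

open scrollDiagIdeal in
/-- Lemma 3.3 of the paper: if the monomial `x^u` is not in `D` and two variables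
`x_{i,j}, x_{i,ℓ}` with `j < ℓ` in the same block have positive exponent in `u`, then
`ℓ = j + 1`; moreover `u` is supported on at most those two variables of block `i`,
at most the last variable of each earlier block, and at most the first variable of
each later block. -/
theorem stmt_13 (F : Type*) [Field F] (k : ℕ) (m : ℕ → ℕ)
    (u : (ℕ × ℕ) →₀ ℕ)
    (hu : ∀ p ∈ u.support, 1 ≤ p.1 ∧ p.1 ≤ k ∧ 1 ≤ p.2 ∧ p.2 ≤ m p.1)
    (hD : (MvPolynomial.monomial u (1 : F)) ∉ scrollDiagIdeal F k m)
    (i j ℓ : ℕ) (hjl : j < ℓ) (hj : 0 < u (i, j)) (hl : 0 < u (i, ℓ)) :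
    ℓ = j + 1 ∧
      (∀ r s : ℕ, r < i → 0 < u (r, s) → s = m r) ∧
      (∀ r s : ℕ, i < r → 0 < u (r, s) → s = 1) ∧
      (∀ s : ℕ, 0 < u (i, s) → s = j ∨ s = ℓ) := by
  have hℓ : ℓ = j + 1 := by
    have := le_add_one_of_pos_of_pos hu hD hj hl
    omega
  obtain ⟨-, -, hj1, -⟩ := bounds_of_pos hu hj
  obtain ⟨-, -, -, hℓm⟩ := bounds_of_pos hu hl
  refine ⟨hℓ, fun r s hr hs => eq_last_of_pos_of_lt hu hD hr hs (by omega) hl,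
    fun r s hr hs => eq_one_of_pos_of_lt hu hD hr hj (by omega) hs, fun s hs => ?_⟩
  rcases lt_trichotomy s j with hsj | rfl | hjs
  · have := le_add_one_of_pos_of_pos hu hD hs hl
    omega
  · exact Or.inl rfl
  · have := le_add_one_of_pos_of_pos hu hD hj hs
    omega
end
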